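/- arXiv:2507.19632 — 2 statements merged into one kernel-verified Lean document; each statement's English description precedes it below -/
import Mathlib

section
/- Let G⃗ = (V, E, w) and G⃗' = (V, E, w') be weighted directed graphs on the same edge set, and suppose G⃗' is an ε-degree balance preserving directed spectral approximation of G⃗, i.e., for all x, y ∈ ℝ^V, |xᵀ (L⃗_G − L⃗_{G'}) y| ≤ ε · √((xᵀ L_G x)·(yᵀ L_G y)). Then the undirected Laplacians satisfy (1 − 2ε)·L_G ⪯ L_{G'} ⪯ (1 + 2ε)·L_G in the Loewner order, where L_{G'} = Bᵀ W' B. -/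
open Matrix BigOperators

noncomputable section

/-- The 0/1 indicator matrix of a map from (edge) indices to vertices:
row `e` is the indicator of the vertex `f e`. -/
def indMat {E V : Type*} [DecidableEq V] (f : E → V) : Matrix E V ℝ :=
  Matrix.of fun e v => if f e = v then (1 : ℝ) else 0

/-- The edge–vertex transfer matrix `B = H - T` of a directed graph with head map `hd`
and tail map `tl`. -/
def transMat {E V : Type*} [DecidableEq V] (hd tl : E → V) : Matrix E V ℝ :=
  indMat hd - indMat tl

/-- The directed Laplacian `Bᵀ W H`. -/
def dirLap {E V : Type*} [Fintype E] [DecidableEq E] [DecidableEq V]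
    (hd tl : E → V) (w : E → ℝ) : Matrix V V ℝ :=
  (transMat hd tl)ᵀ * Matrix.diagonal w * indMat hd

/-- The undirected Laplacian `Bᵀ W B` of the corresponding undirected graph. -/
def undLap {E V : Type*} [Fintype E] [DecidableEq E] [DecidableEq V]
    (hd tl : E → V) (w : E → ℝ) : Matrix V V ℝ :=
  (transMat hd tl)ᵀ * Matrix.diagonal w * transMat hd tl

/-- The corresponding undirected (simple) graph of a weighted directed graph:
`u ~ v` iff `u ≠ v` and some edge of positive weight joins them (in either direction). -/
def undSG {E V : Type*} (hd tl : E → V) (w : E → ℝ) : SimpleGraph V :=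
  SimpleGraph.fromRel (fun u v => ∃ e, 0 < w e ∧ hd e = u ∧ tl e = v)

/-- Directed Laplacian for a graph whose edges are indexed by pairs of vertices. -/
def dirLapP {V : Type*} [Fintype V] [DecidableEq V] (w : V × V → ℝ) : Matrix V V ℝ :=
  dirLap Prod.fst Prod.snd w

/-- Undirected Laplacian for a graph whose edges are indexed by pairs of vertices. -/
def undLapP {V : Type*} [Fintype V] [DecidableEq V] (w : V × V → ℝ) : Matrix V V ℝ :=
  undLap Prod.fst Prod.snd w

/-- Corresponding undirected graph for edges indexed by pairs of vertices. -/
def undSGP {V : Type*} (w : V × V → ℝ) : SimpleGraph V :=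
  undSG Prod.fst Prod.snd w

/-- `B` is a Moore–Penrose pseudoinverse of `A`. -/
def IsMPInv {V : Type*} [Fintype V] (A B : Matrix V V ℝ) : Prop :=
  A * B * A = A ∧ B * A * B = B ∧ (A * B)ᵀ = A * B ∧ (B * A)ᵀ = B * A

open Classical in
/-- The Moore–Penrose pseudoinverse of a (square, real) matrix. -/
noncomputable def mpinv {V : Type*} [Fintype V] (A : Matrix V V ℝ) : Matrix V V ℝ :=
  if h : ∃ B, IsMPInv A B then h.choose else 0

open Classical in
/-- The PSD square root of a positive semidefinite matrix (junk value `0` otherwise). -/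
noncomputable def psdSqrt {V : Type*} [Fintype V] [DecidableEq V] (A : Matrix V V ℝ) :
    Matrix V V ℝ :=
  if h : A.PosSemidef then
    h.1.eigenvectorUnitary.1 * diagonal ((↑) ∘ (√·) ∘ h.1.eigenvalues) *
      (star h.1.eigenvectorUnitary : Matrix V V ℝ)
  else 0

/-- `A^{†/2} = (A†)^{1/2} = (A^{1/2})†` for a PSD matrix `A`. -/
noncomputable def pinvSqrt {V : Type*} [Fintype V] [DecidableEq V] (A : Matrix V V ℝ) :
    Matrix V V ℝ :=
  mpinv (psdSqrt A)

/-- The ℓ₂→ℓ₂ (spectral) operator norm of `A` is at most `c`. -/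
def l2OpNormLE {m n : Type*} [Fintype m] [Fintype n] (A : Matrix m n ℝ) (c : ℝ) : Prop :=
  ∀ (x : m → ℝ) (y : n → ℝ),
    |x ⬝ᵥ A.mulVec y| ≤ c * Real.sqrt (∑ i, x i ^ 2) * Real.sqrt (∑ j, y j ^ 2)

/-- `|xᵀ A y| ≤ ε √((xᵀ L x)(yᵀ L y))` for all vectors `x, y`. -/
def bilinApprox {V : Type*} [Fintype V] (A L : Matrix V V ℝ) (ε : ℝ) : Prop :=
  ∀ x y : V → ℝ,
    |x ⬝ᵥ A.mulVec y| ≤ ε * Real.sqrt ((x ⬝ᵥ L.mulVec x) * (y ⬝ᵥ L.mulVec y))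

/-- Schur complement of a `(V ⊕ X) × (V ⊕ X)` matrix onto the `V`-block. -/
def schurInl {V X : Type*} [Fintype V] [Fintype X] (A : Matrix (V ⊕ X) (V ⊕ X) ℝ) :
    Matrix V V ℝ :=
  A.submatrix Sum.inl Sum.inl -
    A.submatrix Sum.inl Sum.inr * mpinv (A.submatrix Sum.inr Sum.inr) *
      A.submatrix Sum.inr Sum.inl

section Aux
variable {V : Type*} [Fintype V] [DecidableEq V]

lemma indMat_mulVec {E : Type*} (f : E → V) (y : V → ℝ) :
    (indMat f).mulVec y = fun e => y (f e) := by
  ext e; simp [indMat, mulVec, dotProduct]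

lemma transMat_mulVec {E : Type*} (hd tl : E → V) (x : V → ℝ) :
    (transMat hd tl).mulVec x = fun e => x (hd e) - x (tl e) := by
  ext e
  simp [transMat, Matrix.sub_mulVec, indMat_mulVec]

lemma quad_dirLapP (w : V × V → ℝ) (x y : V → ℝ) :
    x ⬝ᵥ (dirLapP w).mulVec y = ∑ e : V × V, w e * ((x e.1 - x e.2) * y e.1) := by
  unfold dirLapP dirLap
  rw [Matrix.mul_assoc, ← Matrix.mulVec_mulVec, ← Matrix.mulVec_mulVec,
    Matrix.dotProduct_mulVec, Matrix.vecMul_transpose, transMat_mulVec,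
    indMat_mulVec]
  simp only [dotProduct, Matrix.mulVec_diagonal]
  exact Finset.sum_congr rfl fun e _ => by ring

lemma quad_undLapP (w : V × V → ℝ) (x y : V → ℝ) :
    x ⬝ᵥ (undLapP w).mulVec y
      = ∑ e : V × V, w e * ((x e.1 - x e.2) * (y e.1 - y e.2)) := by
  unfold undLapP undLap
  rw [Matrix.mul_assoc, ← Matrix.mulVec_mulVec, ← Matrix.mulVec_mulVec,
    Matrix.dotProduct_mulVec, Matrix.vecMul_transpose, transMat_mulVec,
    transMat_mulVec]
  simp only [dotProduct, Matrix.mulVec_diagonal]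
  exact Finset.sum_congr rfl fun e _ => by ring

lemma undLapP_herm (w : V × V → ℝ) : (undLapP w).IsHermitian := by
  unfold undLapP undLap
  rw [← Matrix.conjTranspose_eq_transpose_of_trivial]
  exact Matrix.isHermitian_conjTranspose_mul_mul _ (Matrix.isHermitian_diagonal w)

end Aux

/-- a degree balance preserving directed spectral approximation gives an
undirected spectral approximation `(1-2ε) L_G ⪯ L_{G'} ⪯ (1+2ε) L_G`. -/
theorem stmt_2 {V : Type*} [Fintype V] [DecidableEq V]
    (w w' : V × V → ℝ) (hw : ∀ e, 0 ≤ w e) (hw' : ∀ e, 0 ≤ w' e)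
    (ε : ℝ)
    (happrox : bilinApprox (dirLapP w - dirLapP w') (undLapP w) ε) :
    (undLapP w' - (1 - 2 * ε) • undLapP w).PosSemidef ∧
    ((1 + 2 * ε) • undLapP w - undLapP w').PosSemidef := by
  have hA : ∀ x y : V → ℝ, x ⬝ᵥ (dirLapP w - dirLapP w').mulVec y
      = ∑ e : V × V, (w e - w' e) * ((x e.1 - x e.2) * y e.1) := by
    intro x y
    rw [Matrix.sub_mulVec, dotProduct_sub, quad_dirLapP, quad_dirLapP,
      ← Finset.sum_sub_distrib]
    exact Finset.sum_congr rfl fun e _ => by ring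
  have hqnn : ∀ x : V → ℝ, 0 ≤ x ⬝ᵥ (undLapP w).mulVec x := by
    intro x
    rw [quad_undLapP]
    exact Finset.sum_nonneg fun e _ => mul_nonneg (hw e) (mul_self_nonneg _)
  -- degree balance: derived from the hypothesis applied with the all-ones vector
  have hbal : ∀ z : V → ℝ, ∑ e : V × V, (w e - w' e) * (z e.1 - z e.2) = 0 := by
    intro z
    have h1 := happrox z (fun _ => (1 : ℝ))
    have hz : ((fun _ => (1 : ℝ)) ⬝ᵥ (undLapP w).mulVec (fun _ => (1 : ℝ))) = 0 := by
      rw [quad_undLapP]; simp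
    rw [hz, mul_zero, Real.sqrt_zero, mul_zero] at h1
    have h0 : z ⬝ᵥ (dirLapP w - dirLapP w').mulVec (fun _ => (1 : ℝ)) = 0 :=
      abs_eq_zero.mp (le_antisymm h1 (abs_nonneg _))
    rw [hA] at h0
    simpa using h0
  -- key identity: the undirected quadratic form difference is twice the directed one
  have hkey : ∀ x : V → ℝ,
      x ⬝ᵥ (undLapP w).mulVec x - x ⬝ᵥ (undLapP w').mulVec x
        = 2 * (x ⬝ᵥ (dirLapP w - dirLapP w').mulVec x) := by
    intro x
    have hb := hbal (fun v => x v ^ 2)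
    have hsum : (∑ e : V × V, w e * ((x e.1 - x e.2) * (x e.1 - x e.2)))
        - ∑ e : V × V, w' e * ((x e.1 - x e.2) * (x e.1 - x e.2))
        = 2 * (∑ e : V × V, (w e - w' e) * ((x e.1 - x e.2) * x e.1))
          - ∑ e : V × V, (w e - w' e) * (x e.1 ^ 2 - x e.2 ^ 2) := by
      rw [Finset.mul_sum, ← Finset.sum_sub_distrib, ← Finset.sum_sub_distrib]
      exact Finset.sum_congr rfl fun e _ => by ring
    rw [quad_undLapP, quad_undLapP, hA, hsum]
    rw [hb, sub_zero]
  have hbound : ∀ x : V → ℝ,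
      |x ⬝ᵥ (dirLapP w - dirLapP w').mulVec x| ≤ ε * (x ⬝ᵥ (undLapP w).mulVec x) := by
    intro x
    have := happrox x x
    rwa [Real.sqrt_mul_self (hqnn x)] at this
  have hsm : ∀ (c : ℝ) (M : Matrix V V ℝ), M.IsHermitian → (c • M).IsHermitian := by
    intro c M h
    rw [Matrix.IsHermitian, Matrix.conjTranspose_smul, star_trivial, h]
  constructor
  · refine posSemidef_iff_dotProduct_mulVec.mpr ⟨(undLapP_herm w').sub (hsm _ _ (undLapP_herm w)), fun x => ?_⟩
    rw [star_trivial, Matrix.sub_mulVec, dotProduct_sub, Matrix.smul_mulVec,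
      dotProduct_smul, smul_eq_mul]
    have hk := hkey x
    have hb := abs_le.mp (hbound x)
    linarith [hb.1, hb.2]
  · refine posSemidef_iff_dotProduct_mulVec.mpr ⟨(hsm _ _ (undLapP_herm w)).sub (undLapP_herm w'), fun x => ?_⟩
    rw [star_trivial, Matrix.sub_mulVec, dotProduct_sub, Matrix.smul_mulVec,
      dotProduct_smul, smul_eq_mul]
    have hk := hkey x
    have hb := abs_le.mp (hbound x)
    linarith [hb.1, hb.2]

end
end

section
/- Let C and R be disjoint finite sets, let c ∈ ℝ_{≥0}^C and r ∈ ℝ_{≥0}^R be vertex weightings, and let a ∈ ℝ_{≥0}^C, b ∈ ℝ_{≥0}^R be demand vectors satisfying a ≤ c entrywise, b ≤ r entrywise, and ‖a‖₁ = ‖b‖₁. Then there exists a nonnegative function f : C × R → ℝ_{≥0} such that: (i) for every u ∈ C, Σ_{v∈R} f(u, v) = a_u; (ii) for every v ∈ R, Σ_{u∈C} f(u, v) = b_v; (iii) |supp(f)| ≤ |supp(a)| + |supp(b)|; and (iv) the matrix M ∈ ℝ^{R×C} with M_{v,u} = f(u, v) satisfies ‖diag(r)^{†/2} M diag(c)^{†/2}‖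 ≤ 1 in spectral norm. -/
open Matrix BigOperators

noncomputable section

lemma isMPInv_unique' {V : Type*} [Fintype V] {A B1 B2 : Matrix V V ℝ}
    (h1 : IsMPInv A B1) (h2 : IsMPInv A B2) : B1 = B2 := by
  obtain ⟨h11, h12, h13, h14⟩ := h1
  obtain ⟨h21, h22, h23, h24⟩ := h2
  have hab : A * B1 = A * B2 := by
    calc A * B1 = (A * B1)ᵀ := h13.symm
      _ = B1ᵀ * Aᵀ := Matrix.transpose_mul _ _
      _ = B1ᵀ * (A * B2 * A)ᵀ := by rw [h21]
      _ = B1ᵀ * (Aᵀ * (A * B2)ᵀ) := by rw [Matrix.transpose_mul]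
      _ = (B1ᵀ * Aᵀ) * (A * B2) := by rw [h23, mul_assoc]
      _ = (A * B1)ᵀ * (A * B2) := by rw [Matrix.transpose_mul]
      _ = (A * B1) * (A * B2) := by rw [h13]
      _ = A * B2 := by rw [← mul_assoc, h11]
  have hba : B1 * A = B2 * A := by
    calc B1 * A = (B1 * A)ᵀ := h14.symm
      _ = Aᵀ * B1ᵀ := Matrix.transpose_mul _ _
      _ = (A * (B2 * A))ᵀ * B1ᵀ := by rw [← mul_assoc, h21]
      _ = ((B2 * A)ᵀ * Aᵀ) * B1ᵀ := by rw [Matrix.transpose_mul]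
      _ = (B2 * A) * (Aᵀ * B1ᵀ) := by rw [h24, mul_assoc]
      _ = (B2 * A) * (B1 * A)ᵀ := by rw [← Matrix.transpose_mul]
      _ = (B2 * A) * (B1 * A) := by rw [h14]
      _ = B2 * A := by rw [mul_assoc, ← mul_assoc A B1 A, h11]
  calc B1 = B1 * A * B1 := h12.symm
    _ = B2 * A * B1 := by rw [hba]
    _ = B2 * (A * B1) := mul_assoc _ _ _
    _ = B2 * (A * B2) := by rw [hab]
    _ = B2 := by rw [← mul_assoc, h22]

lemma isMPInv_diag' {V : Type*} [Fintype V] [DecidableEq V] (w : V → ℝ) :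
    IsMPInv (Matrix.diagonal w) (Matrix.diagonal fun i => (w i)⁻¹) := by
  have h1 : ∀ i, w i * (w i)⁻¹ * w i = w i := fun i => by
    rcases eq_or_ne (w i) 0 with h | h <;> field_simp [h]
  have h2 : ∀ i, (w i)⁻¹ * w i * (w i)⁻¹ = (w i)⁻¹ := fun i => by
    rcases eq_or_ne (w i) 0 with h | h <;> field_simp
  refine ⟨?_, ?_, ?_, ?_⟩ <;>
      simp only [Matrix.diagonal_mul_diagonal, Matrix.diagonal_transpose]
  · exact congrArg _ (funext h1)
  · exact congrArg _ (funext h2)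

lemma flow_ex {C R : Type*} [Fintype C] [DecidableEq C] [Fintype R] [DecidableEq R] :
    ∀ (n : ℕ) (a : C → ℝ) (b : R → ℝ), (∀ u, 0 ≤ a u) → (∀ v, 0 ≤ b v) →
    (∑ u, a u) = (∑ v, b v) →
    (Finset.univ.filter fun u => a u ≠ 0).card
      + (Finset.univ.filter fun v => b v ≠ 0).card ≤ n →
    ∃ f : C × R → ℝ, (∀ p, 0 ≤ f p) ∧ (∀ u, ∑ v, f (u, v) = a u) ∧
      (∀ v, ∑ u, f (u, v) = b v) ∧
      (Finset.univ.filter fun p : C × R => f p ≠ 0).card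
        ≤ (Finset.univ.filter fun u => a u ≠ 0).card
          + (Finset.univ.filter fun v => b v ≠ 0).card := by
  intro n
  induction n with
  | zero =>
    intro a b ha hb hsum hcard
    have hA : (Finset.univ.filter fun u => a u ≠ 0) = ∅ := by
      rw [← Finset.card_eq_zero]; omega
    have ha0 : ∀ u, a u = 0 := by
      intro u
      by_contra h
      have : u ∈ (Finset.univ.filter fun u => a u ≠ 0) := by simp [h]
      simp [hA] at this
    have hB : (Finset.univ.filter fun v => b v ≠ 0) = ∅ := by
      rw [← Finset.card_eq_zero]; omega
    have hb0 : ∀ v, b v = 0 := by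
      intro v
      by_contra h
      have : v ∈ (Finset.univ.filter fun v => b v ≠ 0) := by simp [h]
      simp [hB] at this
    exact ⟨0, fun p => le_refl 0, fun u => by simp [ha0], fun v => by simp [hb0], by simp⟩
  | succ n ih =>
    intro a b ha hb hsum hcard
    by_cases hA0 : ∀ u, a u = 0
    · have hbsum : ∑ v, b v = 0 := by rw [← hsum]; simp [hA0]
      have hb0 : ∀ v, b v = 0 := by
        intro v
        have := (Finset.sum_eq_zero_iff_of_nonneg (fun v _ => hb v)).mp hbsum
        exact this v (Finset.mem_univ v)
      exact ⟨0, fun p => le_refl 0, fun u => by simp [hA0], fun v => by simp [hb0], by simp⟩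
    · push_neg at hA0
      obtain ⟨u, hu⟩ := hA0
      have hau : 0 < a u := lt_of_le_of_ne (ha u) (Ne.symm hu)
      have hbsum : 0 < ∑ v, b v := by
        rw [← hsum]
        exact lt_of_lt_of_le hau (Finset.single_le_sum (fun i _ => ha i) (Finset.mem_univ u))
      have hB0 : ∃ v, b v ≠ 0 := by
        by_contra h
        push_neg at h
        simp [h] at hbsum
      obtain ⟨v, hv⟩ := hB0
      have hbv : 0 < b v := lt_of_le_of_ne (hb v) (Ne.symm hv)
      set t := min (a u) (b v) with ht_def
      have ht : 0 < t := lt_min hau hbv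
      set a' := Function.update a u (a u - t) with ha'_def
      set b' := Function.update b v (b v - t) with hb'_def
      have ha'eq : ∀ w, a' w = a w + (if w = u then -t else 0) := by
        intro w
        rcases eq_or_ne w u with rfl | h
        · simp [ha'_def]; ring
        · simp [ha'_def, h]
      have hb'eq : ∀ w, b' w = b w + (if w = v then -t else 0) := by
        intro w
        rcases eq_or_ne w v with rfl | h
        · simp [hb'_def]; ring
        · simp [hb'_def, h]
      have ha' : ∀ w, 0 ≤ a' w := by
        intro w
        rcases eq_or_ne w u with rfl | h
        · simp only [ha'_def, Function.update_self, sub_nonneg]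
          exact min_le_left _ _
        · simp [ha'_def, h, ha w]
      have hb' : ∀ w, 0 ≤ b' w := by
        intro w
        rcases eq_or_ne w v with rfl | h
        · simp only [hb'_def, Function.update_self, sub_nonneg]
          exact min_le_right _ _
        · simp [hb'_def, h, hb w]
      have hsum' : ∑ w, a' w = ∑ w, b' w := by
        simp only [ha'eq, hb'eq, Finset.sum_add_distrib, Finset.sum_ite_eq',
          Finset.mem_univ, if_true, hsum]
      -- support subsets
      have hsubA : (Finset.univ.filter fun w => a' w ≠ 0) ⊆
          (Finset.univ.filter fun w => a w ≠ 0) := by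
        intro w hw
        simp only [Finset.mem_filter, Finset.mem_univ, true_and] at hw ⊢
        rcases eq_or_ne w u with rfl | h
        · exact hu
        · rwa [ha'eq, if_neg h, add_zero] at hw
      have hsubB : (Finset.univ.filter fun w => b' w ≠ 0) ⊆
          (Finset.univ.filter fun w => b w ≠ 0) := by
        intro w hw
        simp only [Finset.mem_filter, Finset.mem_univ, true_and] at hw ⊢
        rcases eq_or_ne w v with rfl | h
        · exact hv
        · rwa [hb'eq, if_neg h, add_zero] at hw
      have hdrop : (Finset.univ.filter fun w => a' w ≠ 0).card
          + (Finset.univ.filter fun w => b' w ≠ 0).card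
          < (Finset.univ.filter fun w => a w ≠ 0).card
          + (Finset.univ.filter fun w => b w ≠ 0).card := by
        rcases min_cases (a u) (b v) with ⟨hmin, _⟩ | ⟨hmin, _⟩
        · have hzero : a' u = 0 := by simp [ha'_def, ht_def, hmin]
          have hssA : (Finset.univ.filter fun w => a' w ≠ 0) ⊂
              (Finset.univ.filter fun w => a w ≠ 0) := by
            refine Finset.ssubset_iff_of_subset hsubA |>.mpr ⟨u, by simp [hu], by simp [hzero]⟩
          have := Finset.card_lt_card hssA
          have := Finset.card_le_card hsubB
          omega
        · have hzero : b' v = 0 := by simp [hb'_def, ht_def, hmin]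
          have hssB : (Finset.univ.filter fun w => b' w ≠ 0) ⊂
              (Finset.univ.filter fun w => b w ≠ 0) := by
            refine Finset.ssubset_iff_of_subset hsubB |>.mpr ⟨v, by simp [hv], by simp [hzero]⟩
          have := Finset.card_lt_card hssB
          have := Finset.card_le_card hsubA
          omega
      obtain ⟨f', hf'0, hf'a, hf'b, hf'card⟩ := ih a' b' ha' hb' hsum' (by omega)
      refine ⟨Function.update f' (u, v) (f' (u, v) + t), ?_, ?_, ?_, ?_⟩
      · intro p
        rcases eq_or_ne p (u, v) with rfl | h
        · simp only [Function.update_self]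
          exact add_nonneg (hf'0 _) ht.le
        · simp [Function.update_apply, h, hf'0 p]
      · intro u'
        have hpt : ∀ v', Function.update f' (u, v) (f' (u, v) + t) (u', v')
            = f' (u', v') + (if (u', v') = (u, v) then t else 0) := by
          intro v'
          rcases eq_or_ne ((u', v') : C × R) (u, v) with h | h
          · rw [h]; simp
          · simp [Function.update_apply, h]
        simp only [hpt, Finset.sum_add_distrib, hf'a]
        rcases eq_or_ne u' u with rfl | h
        · simp only [Prod.mk.injEq, true_and]
          rw [Finset.sum_ite_eq' Finset.univ v (fun _ => t)]
          simp [ha'eq]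
        · simp only [Prod.mk.injEq, h, false_and, if_false, Finset.sum_const_zero, add_zero]
          rw [ha'eq, if_neg h, add_zero]
      · intro v'
        have hpt : ∀ u', Function.update f' (u, v) (f' (u, v) + t) (u', v')
            = f' (u', v') + (if (u', v') = (u, v) then t else 0) := by
          intro u'
          rcases eq_or_ne ((u', v') : C × R) (u, v) with h | h
          · rw [h]; simp
          · simp [Function.update_apply, h]
        simp only [hpt, Finset.sum_add_distrib, hf'b]
        rcases eq_or_ne v' v with rfl | h
        · simp only [Prod.mk.injEq, and_true]
          rw [Finset.sum_ite_eq' Finset.univ u (fun _ => t)]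
          simp [hb'eq]
        · simp only [Prod.mk.injEq, h, and_false, if_false, Finset.sum_const_zero, add_zero]
          rw [hb'eq, if_neg h, add_zero]
      · have hsub : (Finset.univ.filter fun p : C × R =>
            Function.update f' (u, v) (f' (u, v) + t) p ≠ 0) ⊆
            (Finset.univ.filter fun p : C × R => f' p ≠ 0) ∪ {(u, v)} := by
          intro p hp
          simp only [Finset.mem_filter, Finset.mem_univ, true_and] at hp
          rcases eq_or_ne p (u, v) with rfl | h
          · simp
          · rw [Function.update_apply, if_neg h] at hp
            simp [hp]
        calc (Finset.univ.filter fun p : C × R =>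
            Function.update f' (u, v) (f' (u, v) + t) p ≠ 0).card
            ≤ ((Finset.univ.filter fun p : C × R => f' p ≠ 0) ∪ {(u, v)}).card :=
              Finset.card_le_card hsub
          _ ≤ (Finset.univ.filter fun p : C × R => f' p ≠ 0).card + 1 := by
              refine le_trans (Finset.card_union_le _ _) ?_
              simp
          _ ≤ (Finset.univ.filter fun w => a w ≠ 0).card
              + (Finset.univ.filter fun w => b w ≠ 0).card := by omega

lemma opnorm_bound {C R : Type*} [Fintype C] [DecidableEq C] [Fintype R] [DecidableEq R]
    (cv : C → ℝ) (rv : R → ℝ) (a : C → ℝ) (b : R → ℝ) (f : C × R → ℝ)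
    (hcv : ∀ u, 0 ≤ cv u) (hrv : ∀ v, 0 ≤ rv v)
    (ha : ∀ u, 0 ≤ a u) (hb : ∀ v, 0 ≤ b v)
    (hac : ∀ u, a u ≤ cv u) (hbr : ∀ v, b v ≤ rv v)
    (hf0 : ∀ p, 0 ≤ f p) (hfa : ∀ u, ∑ v, f (u, v) = a u) (hfb : ∀ v, ∑ u, f (u, v) = b v) :
    l2OpNormLE
      (Matrix.diagonal (fun v => (Real.sqrt (rv v))⁻¹)
        * Matrix.of (fun (v : R) (u : C) => f (u, v))
        * Matrix.diagonal (fun u => (Real.sqrt (cv u))⁻¹)) 1 := by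
  intro x y
  set dR : R → ℝ := fun v => (Real.sqrt (rv v))⁻¹ with hdR
  set dC : C → ℝ := fun u => (Real.sqrt (cv u))⁻¹ with hdC
  set M : Matrix R C ℝ := Matrix.of (fun (v : R) (u : C) => f (u, v)) with hM
  have hentry : ∀ v u, (Matrix.diagonal dR * M * Matrix.diagonal dC) v u
      = dR v * f (u, v) * dC u := by
    intro v u
    rw [Matrix.mul_diagonal, Matrix.diagonal_mul]
    rfl
  -- key scalar bounds
  have hkeyR : ∀ v, b v * (dR v) ^ 2 ≤ 1 := by
    intro v
    rcases eq_or_lt_of_le (hrv v) with h | h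
    · have hb0 : b v = 0 := le_antisymm (le_of_le_of_eq (hbr v) h.symm) (hb v)
      simp [hb0]
    · have hsq : (dR v) ^ 2 = (rv v)⁻¹ := by
        show (Real.sqrt (rv v))⁻¹ ^ 2 = (rv v)⁻¹
        rw [← Real.sqrt_inv, Real.sq_sqrt (inv_nonneg.mpr h.le)]
      rw [hsq, ← div_eq_mul_inv, div_le_one h]
      exact hbr v
  have hkeyC : ∀ u, a u * (dC u) ^ 2 ≤ 1 := by
    intro u
    rcases eq_or_lt_of_le (hcv u) with h | h
    · have ha0 : a u = 0 := le_antisymm (le_of_le_of_eq (hac u) h.symm) (ha u)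
      simp [ha0]
    · have hsq : (dC u) ^ 2 = (cv u)⁻¹ := by
        show (Real.sqrt (cv u))⁻¹ ^ 2 = (cv u)⁻¹
        rw [← Real.sqrt_inv, Real.sq_sqrt (inv_nonneg.mpr h.le)]
      rw [hsq, ← div_eq_mul_inv, div_le_one h]
      exact hac u
  have hrep : x ⬝ᵥ (Matrix.diagonal dR * M * Matrix.diagonal dC).mulVec y
      = ∑ p : C × R, f p * ((dR p.2 * x p.2) * (dC p.1 * y p.1)) := by
    rw [Fintype.sum_prod_type]
    simp only [dotProduct, Matrix.mulVec, dotProduct, Finset.mul_sum]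
    rw [Finset.sum_comm]
    refine Finset.sum_congr rfl fun u _ => Finset.sum_congr rfl fun v _ => ?_
    rw [hentry]
    ring
  rw [hrep]
  set g1 : C × R → ℝ := fun p => Real.sqrt (f p) * |dR p.2 * x p.2| with hg1
  set g2 : C × R → ℝ := fun p => Real.sqrt (f p) * |dC p.1 * y p.1| with hg2
  have step1 : |∑ p : C × R, f p * ((dR p.2 * x p.2) * (dC p.1 * y p.1))|
      ≤ ∑ p : C × R, g1 p * g2 p := by
    refine le_trans (Finset.abs_sum_le_sum_abs _ _) (Finset.sum_le_sum fun p _ => ?_)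
    rw [abs_mul, abs_mul, abs_of_nonneg (hf0 p), hg1, hg2]
    have : f p = Real.sqrt (f p) * Real.sqrt (f p) := (Real.mul_self_sqrt (hf0 p)).symm
    rw [this]
    ring_nf
    exact le_refl _
  have step2 : ∑ p : C × R, g1 p * g2 p
      ≤ Real.sqrt (∑ p : C × R, g1 p ^ 2) * Real.sqrt (∑ p : C × R, g2 p ^ 2) :=
    Real.sum_mul_le_sqrt_mul_sqrt _ _ _
  have hsq1 : ∑ p : C × R, g1 p ^ 2 ≤ ∑ v, x v ^ 2 := by
    have : ∀ p : C × R, g1 p ^ 2 = f p * (dR p.2 * x p.2) ^ 2 := by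
      intro p
      rw [hg1, mul_pow, Real.sq_sqrt (hf0 p), sq_abs]
    rw [Finset.sum_congr rfl fun p _ => this p]
    rw [Fintype.sum_prod_type, Finset.sum_comm]
    refine Finset.sum_le_sum fun v _ => ?_
    have hred : ∀ u : C, f (u, v) * (dR (u, v).2 * x (u, v).2) ^ 2
        = f (u, v) * (dR v * x v) ^ 2 := fun u => rfl
    rw [Finset.sum_congr rfl fun u _ => hred u, ← Finset.sum_mul, hfb v]
    calc b v * (dR v * x v) ^ 2 = (b v * dR v ^ 2) * x v ^ 2 := by ring
      _ ≤ 1 * x v ^ 2 := mul_le_mul_of_nonneg_right (hkeyR v) (sq_nonneg _)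
      _ = x v ^ 2 := one_mul _
  have hsq2 : ∑ p : C × R, g2 p ^ 2 ≤ ∑ u, y u ^ 2 := by
    have : ∀ p : C × R, g2 p ^ 2 = f p * (dC p.1 * y p.1) ^ 2 := by
      intro p
      rw [hg2, mul_pow, Real.sq_sqrt (hf0 p), sq_abs]
    rw [Finset.sum_congr rfl fun p _ => this p]
    rw [Fintype.sum_prod_type]
    refine Finset.sum_le_sum fun u _ => ?_
    have hred : ∀ v : R, f (u, v) * (dC (u, v).1 * y (u, v).1) ^ 2
        = f (u, v) * (dC u * y u) ^ 2 := fun v => rfl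
    rw [Finset.sum_congr rfl fun v _ => hred v, ← Finset.sum_mul, hfa u]
    calc a u * (dC u * y u) ^ 2 = (a u * dC u ^ 2) * y u ^ 2 := by ring
      _ ≤ 1 * y u ^ 2 := mul_le_mul_of_nonneg_right (hkeyC u) (sq_nonneg _)
      _ = y u ^ 2 := one_mul _
  rw [one_mul]
  refine le_trans step1 (le_trans step2 ?_)
  exact mul_le_mul (Real.sqrt_le_sqrt hsq1) (Real.sqrt_le_sqrt hsq2)
    (Real.sqrt_nonneg _) (Real.sqrt_nonneg _)

lemma mpinv_eq' {V : Type*} [Fintype V] {A B : Matrix V V ℝ} (h : IsMPInv A B) :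
    mpinv A = B := by
  have hex : ∃ B, IsMPInv A B := ⟨B, h⟩
  rw [mpinv, dif_pos hex]
  exact isMPInv_unique' hex.choose_spec h

lemma psdSqrt_diag' {V : Type*} [Fintype V] [DecidableEq V] (w : V → ℝ) (hw : ∀ v, 0 ≤ w v) :
    psdSqrt (Matrix.diagonal w) = Matrix.diagonal fun v => Real.sqrt (w v) := by
  have hpsd : (Matrix.diagonal w).PosSemidef := Matrix.posSemidef_diagonal_iff.mpr hw
  rw [psdSqrt, dif_pos hpsd]
  set U : Matrix V V ℝ := hpsd.1.eigenvectorUnitary.1 with hU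
  have hUs : U * star U = 1 := Unitary.coe_mul_star_self _
  have hsU : star U * U = 1 := Unitary.coe_star_mul_self _
  have hspec := hpsd.1.spectral_theorem
  rw [Unitary.conjStarAlgAut_apply] at hspec
  have hAU : diagonal w * U = U * diagonal hpsd.1.eigenvalues := by
    conv_lhs => rw [hspec]
    rw [mul_assoc, ← hU, hsU, mul_one]
    rfl
  have hent : ∀ i j, Real.sqrt (w i) * U i j = U i j * Real.sqrt (hpsd.1.eigenvalues j) := by
    intro i j
    have := congrFun (congrFun hAU i) j
    rw [diagonal_mul, mul_diagonal] at this
    rcases eq_or_ne (U i j) 0 with h | h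
    · simp [h]
    · have : w i = hpsd.1.eigenvalues j := mul_right_cancel₀ h (by rw [this]; ring)
      rw [this]; ring
  have hSU : diagonal (fun v => Real.sqrt (w v)) * U =
      U * diagonal (fun j => Real.sqrt (hpsd.1.eigenvalues j)) := by
    ext i j
    rw [diagonal_mul, mul_diagonal]
    exact hent i j
  calc U * diagonal ((↑) ∘ (√·) ∘ hpsd.1.eigenvalues) * star U
      = U * diagonal (fun j => Real.sqrt (hpsd.1.eigenvalues j)) * star U := rfl
    _ = diagonal (fun v => Real.sqrt (w v)) * (U * star U) := by rw [← hSU, mul_assoc]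
    _ = _ := by rw [hUs, mul_one]

lemma pinvSqrt_diag' {V : Type*} [Fintype V] [DecidableEq V] (w : V → ℝ) (hw : ∀ v, 0 ≤ w v) :
    pinvSqrt (Matrix.diagonal w) = Matrix.diagonal fun v => (Real.sqrt (w v))⁻¹ := by
  rw [pinvSqrt, psdSqrt_diag' w hw, mpinv_eq' (isMPInv_diag' _)]

/-- greedy degree-fixing flow between demand vectors. -/
theorem stmt_9 {C R : Type*} [Fintype C] [DecidableEq C] [Fintype R] [DecidableEq R]
    (cv : C → ℝ) (rv : R → ℝ) (a : C → ℝ) (b : R → ℝ)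
    (hcv : ∀ u, 0 ≤ cv u) (hrv : ∀ v, 0 ≤ rv v)
    (ha : ∀ u, 0 ≤ a u) (hb : ∀ v, 0 ≤ b v)
    (hac : ∀ u, a u ≤ cv u) (hbr : ∀ v, b v ≤ rv v)
    (hsum : ∑ u, |a u| = ∑ v, |b v|) :
    ∃ f : C × R → ℝ,
      (∀ p, 0 ≤ f p) ∧
      (∀ u : C, ∑ v : R, f (u, v) = a u) ∧
      (∀ v : R, ∑ u : C, f (u, v) = b v) ∧
      (Finset.univ.filter fun p : C × R => f p ≠ 0).card
        ≤ (Finset.univ.filter fun u : C => a u ≠ 0).card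
          + (Finset.univ.filter fun v : R => b v ≠ 0).card ∧
      l2OpNormLE
        (pinvSqrt (Matrix.diagonal rv) * Matrix.of (fun (v : R) (u : C) => f (u, v)) *
          pinvSqrt (Matrix.diagonal cv)) 1 := by
  have hsum' : ∑ u, a u = ∑ v, b v := by
    rw [Finset.sum_congr rfl fun u _ => (abs_of_nonneg (ha u)).symm,
      Finset.sum_congr rfl fun v _ => (abs_of_nonneg (hb v)).symm]
    exact hsum
  obtain ⟨f, hf0, hfa, hfb, hfcard⟩ := flow_ex
    ((Finset.univ.filter fun u => a u ≠ 0).card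
      + (Finset.univ.filter fun v => b v ≠ 0).card) a b ha hb hsum' le_rfl
  refine ⟨f, hf0, hfa, hfb, hfcard, ?_⟩
  rw [pinvSqrt_diag' rv hrv, pinvSqrt_diag' cv hcv]
  exact opnorm_bound cv rv a b f hcv hrv ha hb hac hbr hf0 hfa hfb

end
end
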